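/- arXiv:1912.11574 — 2 statements merged into one kernel-verified Lean document; each statement's English description precedes it below -/
import Mathlib

section
/- For all vectors a, b in ℝ^n and all real p ≥ 2, |(a+b)/2|^p + |(a-b)/2|^p ≤ (1/2)|a|^p + (1/2)|b|^p. -/
lemma sq_rpow_half (x : ℝ) (hx : 0 ≤ x) (p : ℝ) : (x ^ 2) ^ (p / 2) = x ^ p := by
  rw [← Real.rpow_natCast x 2, ← Real.rpow_mul hx]
  congr 1
  ring

lemma real_add_rpow_le (a b : ℝ) (ha : 0 ≤ a) (hb : 0 ≤ b) {p : ℝ} (hp : 1 ≤ p) :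
    a ^ p + b ^ p ≤ (a + b) ^ p := by
  have h := NNReal.add_rpow_le_rpow_add a.toNNReal b.toNNReal hp
  have := NNReal.coe_le_coe.2 h
  push_cast at this
  rwa [Real.coe_toNNReal _ ha, Real.coe_toNNReal _ hb] at this

/-- Pointwise Clarkson inequality on ℝⁿ: for `p ≥ 2`,
`|(a+b)/2|^p + |(a-b)/2|^p ≤ (1/2)|a|^p + (1/2)|b|^p`. -/
theorem clarkson_pointwise (n : ℕ) (p : ℝ) (hp : 2 ≤ p)
    (a b : EuclideanSpace ℝ (Fin n)) :
    ‖(2 : ℝ)⁻¹ • (a + b)‖ ^ p + ‖(2 : ℝ)⁻¹ • (a - b)‖ ^ p ≤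
      (1 / 2) * ‖a‖ ^ p + (1 / 2) * ‖b‖ ^ p := by
  set X := ‖(2 : ℝ)⁻¹ • (a + b)‖ with hX
  set Y := ‖(2 : ℝ)⁻¹ • (a - b)‖ with hY
  have hX0 : 0 ≤ X := norm_nonneg _
  have hY0 : 0 ≤ Y := norm_nonneg _
  have hA0 : 0 ≤ ‖a‖ := norm_nonneg _
  have hB0 : 0 ≤ ‖b‖ := norm_nonneg _
  have hp2 : (1 : ℝ) ≤ p / 2 := by linarith
  -- parallelogram identity
  have hpar : X ^ 2 + Y ^ 2 = (1 / 2) * ‖a‖ ^ 2 + (1 / 2) * ‖b‖ ^ 2 := by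
    have h := @parallelogram_law_with_norm ℝ _ _ _ _ a b
    have hXab : X = ‖a + b‖ / 2 := by
      rw [hX, norm_smul]
      simp [abs_of_nonneg]
      ring
    have hYab : Y = ‖a - b‖ / 2 := by
      rw [hY, norm_smul]
      simp [abs_of_nonneg]
      ring
    rw [hXab, hYab]
    nlinarith [h]
  calc X ^ p + Y ^ p = (X ^ 2) ^ (p / 2) + (Y ^ 2) ^ (p / 2) := by
        rw [sq_rpow_half X hX0, sq_rpow_half Y hY0]
    _ ≤ (X ^ 2 + Y ^ 2) ^ (p / 2) :=
        real_add_rpow_le _ _ (by positivity) (by positivity) hp2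
    _ = ((1 / 2) * ‖a‖ ^ 2 + (1 / 2) * ‖b‖ ^ 2) ^ (p / 2) := by rw [hpar]
    _ ≤ (1 / 2) * (‖a‖ ^ 2) ^ (p / 2) + (1 / 2) * (‖b‖ ^ 2) ^ (p / 2) := by
        exact (convexOn_rpow hp2).2 (Set.mem_Ici.2 (by positivity)) (Set.mem_Ici.2 (by positivity)) (by norm_num)
          (by norm_num) (by norm_num)
    _ = (1 / 2) * ‖a‖ ^ p + (1 / 2) * ‖b‖ ^ p := by
        rw [sq_rpow_half _ hA0, sq_rpow_half _ hB0]
end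

section
/- Let u : ℝ^2 → ℝ be weakly differentiable with gradient in L^p, p ≥ 2, and define u*(y,x_2) = (u(y,x_2) + u(-y,x_2))/2. Then ∫_{ℝ^2} |Du*|^p dx ≤ ∫_{ℝ^2} |Du|^p dx − ∫_{ℝ^2} |D_{S^0} u|^p dx, where D_{S^0}u(y,x_2) = (∂_y u(y,x_2) + ∂_y u(-y,x_2))/2. -/
open MeasureTheory

/-- Reflection of the plane in the first coordinate: `(y, x₂) ↦ (-y, x₂)`. -/
noncomputable def reflFirst : EuclideanSpace ℝ (Fin 2) → EuclideanSpace ℝ (Fin 2) :=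
  fun x => x - (2 * x 0) • EuclideanSpace.single (0 : Fin 2) (1 : ℝ)

/-!
Write `σ` for the reflection, `a = ∇u(x)` and `b = σ (∇u(σx))`. Then `∇u*(x) = (a + b)/2`, and since
`σ` flips the first coordinate, `D_{S⁰}u(x)` is the first coordinate of `(a - b)/2`. Clarkson's
inequality `‖(a+b)/2‖^p + ‖(a-b)/2‖^p ≤ (‖a‖^p + ‖b‖^p)/2` for `p ≥ 2` (the parallelogram law,
followed by superadditivity and convexity of `t ↦ t^(p/2)`) bounds the integrands pointwise, and
`∫ ‖b‖^p = ∫ ‖∇u‖^p` because `σ` is a linear isometry and hence preserves Lebesgue measure.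
-/

open InnerProductSpace Submodule

theorem clarkson_inequality {E : Type*} [NormedAddCommGroup E] [InnerProductSpace ℝ E]
    {p : ℝ} (hp : 2 ≤ p) (a b : E) :
    ‖(2 : ℝ)⁻¹ • (a + b)‖ ^ p + ‖(2 : ℝ)⁻¹ • (a - b)‖ ^ p ≤ (‖a‖ ^ p + ‖b‖ ^ p) / 2 := by
  set q := p / 2
  have hq : 1 ≤ q := by simp only [q]; linarith
  have rpow_eq : ∀ r : ℝ, 0 ≤ r → r ^ p = (r ^ 2) ^ q := fun r hr => by
    rw [← Real.rpow_natCast, ← Real.rpow_mul hr]; congr 1; push_cast; ring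
  have parallelogram :
      ‖(2 : ℝ)⁻¹ • (a + b)‖ ^ 2 + ‖(2 : ℝ)⁻¹ • (a - b)‖ ^ 2 = (‖a‖ ^ 2 + ‖b‖ ^ 2) / 2 := by
    have := parallelogram_law_with_norm ℝ a b
    rw [norm_smul, norm_smul, Real.norm_of_nonneg (by norm_num)]
    linear_combination this / 4
  calc _ = (‖(2 : ℝ)⁻¹ • (a + b)‖ ^ 2) ^ q + (‖(2 : ℝ)⁻¹ • (a - b)‖ ^ 2) ^ q := by
        rw [rpow_eq _ (norm_nonneg _), rpow_eq _ (norm_nonneg _)]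
    _ ≤ (‖(2 : ℝ)⁻¹ • (a + b)‖ ^ 2 + ‖(2 : ℝ)⁻¹ • (a - b)‖ ^ 2) ^ q :=
        Real.add_rpow_le_rpow_add (by positivity) (by positivity) hq
    _ = ((2 : ℝ)⁻¹ • ‖a‖ ^ 2 + (2 : ℝ)⁻¹ • ‖b‖ ^ 2) ^ q := by
        rw [parallelogram, smul_eq_mul, smul_eq_mul]; ring_nf
    _ ≤ (2 : ℝ)⁻¹ • (‖a‖ ^ 2) ^ q + (2 : ℝ)⁻¹ • (‖b‖ ^ 2) ^ q :=
        (convexOn_rpow hq).2 (sq_nonneg ‖a‖) (sq_nonneg ‖b‖) (by norm_num) (by norm_num)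
          (by norm_num)
    _ = _ := by
        rw [← rpow_eq _ (norm_nonneg a), ← rpow_eq _ (norm_nonneg b), smul_eq_mul, smul_eq_mul]
        ring

section Gradient

variable {F : Type*} [NormedAddCommGroup F] [InnerProductSpace ℝ F] [CompleteSpace F]

theorem HasGradientAt.comp_linearIsometryEquiv {u : F → ℝ} {g x : F} (R : F ≃ₗᵢ[ℝ] F)
    (h : HasGradientAt u g (R x)) : HasGradientAt (fun y => u (R y)) (R.symm g) x := by
  have toDual_symm : toDual ℝ F (R.symm g) = (toDual ℝ F g).comp (R : F →L[ℝ] F) := by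
    ext w
    simp [R.symm.inner_map_eq_flip]
  rw [hasGradientAt_iff_hasFDerivAt, toDual_symm]
  exact h.hasFDerivAt.comp x R.hasFDerivAt

theorem gradient_half_add_comp_linearIsometryEquiv {u : F → ℝ} (hu : Differentiable ℝ u)
    (R : F ≃ₗᵢ[ℝ] F) (x : F) :
    gradient (fun y => (u y + u (R y)) / 2) x =
      (2 : ℝ)⁻¹ • (gradient u x + R.symm (gradient u (R x))) := by
  refine HasGradientAt.gradient ?_
  have hR := ((hu (R x)).hasGradientAt.comp_linearIsometryEquiv R).hasFDerivAt
  rw [hasGradientAt_iff_hasFDerivAt, map_smul, map_add]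
  have half_eq : (fun y => (u y + u (R y)) / 2) = fun y => (2 : ℝ)⁻¹ • (u y + u (R y)) := by
    ext y
    rw [smul_eq_mul, inv_mul_eq_div]
  rw [half_eq]
  exact ((hu x).hasGradientAt.hasFDerivAt.add hR).const_smul (2 : ℝ)⁻¹

variable [MeasurableSpace F] [BorelSpace F]

theorem measurable_gradient (u : F → ℝ) : Measurable (gradient u) :=
  (toDual ℝ F).symm.continuous.measurable.comp (measurable_fderiv ℝ u)

end Gradient

theorem integral_le_integral_sub_of_add_le_average {α : Type*} [MeasurableSpace α]
    {μ : Measure α} {T : α → α} (hT : MeasurePreserving T μ μ) (hTe : MeasurableEmbedding T)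
    {f g h : α → ℝ} (hf : Integrable f μ) (hg : AEStronglyMeasurable g μ)
    (hh : AEStronglyMeasurable h μ) (hg0 : ∀ x, 0 ≤ g x) (hh0 : ∀ x, 0 ≤ h x)
    (hle : ∀ x, g x + h x ≤ (f x + f (T x)) / 2) :
    ∫ x, g x ∂μ ≤ ∫ x, f x ∂μ - ∫ x, h x ∂μ := by
  have hfT : Integrable (fun x => f (T x)) μ := (hT.integrable_comp_emb hTe).mpr hf
  have hbound : Integrable (fun x => (f x + f (T x)) / 2) μ := (hf.add hfT).div_const 2
  have hgi : Integrable g μ := hbound.mono' hg <| .of_forall fun x => by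
    rw [Real.norm_of_nonneg (hg0 x)]; linarith [hle x, hh0 x]
  have hhi : Integrable h μ := hbound.mono' hh <| .of_forall fun x => by
    rw [Real.norm_of_nonneg (hh0 x)]; linarith [hle x, hg0 x]
  have := integral_mono (f := fun x => g x + h x) (hgi.add hhi) hbound hle
  rw [integral_add hgi hhi, integral_div, integral_add hf hfT, hT.integral_comp hTe] at this
  linarith

section Reflection

variable {E : Type*} [NormedAddCommGroup E] [InnerProductSpace ℝ E]

theorem inner_reflection_orthogonal_singleton (v w : E) :
    ⟪v, reflection (ℝ ∙ v)ᗮ w⟫_ℝ = -⟪v, w⟫_ℝ := by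
  have := (reflection (ℝ ∙ v)ᗮ).inner_map_map v (reflection (ℝ ∙ v)ᗮ w)
  rw [reflection_orthogonalComplement_singleton_eq_neg, reflection_reflection,
    inner_neg_left] at this
  linarith

variable [CompleteSpace E]

theorem norm_gradient_reflection_average_rpow_add_le {p : ℝ} (hp : 2 ≤ p) {v : E}
    (hv : ‖v‖ = 1) {u : E → ℝ} (hu : Differentiable ℝ u) (x : E) :
    ‖gradient (fun y => (u y + u (reflection (ℝ ∙ v)ᗮ y)) / 2) x‖ ^ p +
        |(⟪v, gradient u x⟫_ℝ + ⟪v, gradient u (reflection (ℝ ∙ v)ᗮ x)⟫_ℝ) / 2| ^ p ≤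
      (‖gradient u x‖ ^ p + ‖gradient u (reflection (ℝ ∙ v)ᗮ x)‖ ^ p) / 2 := by
  set σ := reflection (ℝ ∙ v)ᗮ
  set a := gradient u x
  set b := σ (gradient u (σ x))
  have directional_eq :
      (⟪v, a⟫_ℝ + ⟪v, gradient u (σ x)⟫_ℝ) / 2 = ⟪v, (2 : ℝ)⁻¹ • (a - b)⟫_ℝ := by
    rw [real_inner_smul_right, inner_sub_right, inner_reflection_orthogonal_singleton]
    ring
  have directional_le : |⟪v, (2 : ℝ)⁻¹ • (a - b)⟫_ℝ| ≤ ‖(2 : ℝ)⁻¹ • (a - b)‖ := by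
    simpa [hv] using abs_real_inner_le_norm v ((2 : ℝ)⁻¹ • (a - b))
  rw [gradient_half_add_comp_linearIsometryEquiv hu, reflection_symm, directional_eq,
    ← σ.norm_map (gradient u (σ x))]
  calc _ ≤ ‖(2 : ℝ)⁻¹ • (a + b)‖ ^ p + ‖(2 : ℝ)⁻¹ • (a - b)‖ ^ p := by gcongr
    _ ≤ _ := clarkson_inequality hp a b

variable [FiniteDimensional ℝ E] [MeasurableSpace E] [BorelSpace E]

theorem integral_norm_gradient_reflection_average_rpow_le {p : ℝ} (hp : 2 ≤ p) {v : E}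
    (hv : ‖v‖ = 1) {u : E → ℝ} (hu : Differentiable ℝ u)
    (hLp : MemLp (fun x => ‖gradient u x‖) (ENNReal.ofReal p)) :
    ∫ x, ‖gradient (fun y => (u y + u (reflection (ℝ ∙ v)ᗮ y)) / 2) x‖ ^ p ≤
      (∫ x, ‖gradient u x‖ ^ p) -
        ∫ x, |(⟪v, gradient u x⟫_ℝ + ⟪v, gradient u (reflection (ℝ ∙ v)ᗮ x)⟫_ℝ) / 2| ^ p := by
  set σ := reflection (ℝ ∙ v)ᗮ
  have hp0 : 0 < p := by linarith
  have integrable_rpow : Integrable fun x => ‖gradient u x‖ ^ p := by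
    simpa [ENNReal.toReal_ofReal hp0.le] using
      hLp.integrable_norm_rpow (ENNReal.ofReal_pos.2 hp0).ne' ENNReal.ofReal_ne_top
  have measurable_component : Measurable fun x => ⟪v, gradient u x⟫_ℝ :=
    (continuous_const.inner continuous_id).measurable.comp (measurable_gradient u)
  refine integral_le_integral_sub_of_add_le_average σ.measurePreserving
    σ.toHomeomorph.measurableEmbedding integrable_rpow ?_ ?_ (fun _ => by positivity)
    (fun _ => by positivity) (norm_gradient_reflection_average_rpow_add_le hp hv hu)
  · exact ((measurable_gradient _).norm.pow_const p).aestronglyMeasurable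
  · have := measurable_component.add (measurable_component.comp σ.continuous.measurable)
    exact ((this.div_const 2).abs.pow_const p).aestronglyMeasurable

end Reflection

theorem reflFirst_eq_reflection :
    reflFirst = reflection (ℝ ∙ EuclideanSpace.single (0 : Fin 2) (1 : ℝ))ᗮ := by
  ext x i
  simp [reflFirst, reflection_orthogonal_apply, reflection_singleton_apply,
    EuclideanSpace.inner_single_left]

/-- Pólya–Szegő type inequality for the axial average in the plane: with
`u*(y,x₂) = (u(y,x₂) + u(-y,x₂))/2` and
`D_{S⁰}u(y,x₂) = (∂_y u(y,x₂) + ∂_y u(-y,x₂))/2`, one has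
`∫ |Du*|^p ≤ ∫ |Du|^p - ∫ |D_{S⁰}u|^p`. -/
theorem axial_average_polya_szego (p : ℝ) (hp : 2 ≤ p)
    (u : EuclideanSpace ℝ (Fin 2) → ℝ) (hu : Differentiable ℝ u)
    (hLp : MemLp (fun x => ‖gradient u x‖) (ENNReal.ofReal p) volume)
    (ustar : EuclideanSpace ℝ (Fin 2) → ℝ)
    (hustar : ∀ x, ustar x = (u x + u (reflFirst x)) / 2)
    (DS : EuclideanSpace ℝ (Fin 2) → ℝ)
    (hDS : ∀ x, DS x = (gradient u x 0 + gradient u (reflFirst x) 0) / 2) :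
    (∫ x, ‖gradient ustar x‖ ^ p) ≤
      (∫ x, ‖gradient u x‖ ^ p) - ∫ x, |DS x| ^ p := by
  have coord_eq_inner (w : EuclideanSpace ℝ (Fin 2)) :
      w 0 = ⟪EuclideanSpace.single (0 : Fin 2) (1 : ℝ), w⟫_ℝ := by
    simp [EuclideanSpace.inner_single_left]
  obtain rfl : ustar = fun x => (u x + u (reflFirst x)) / 2 := funext hustar
  obtain rfl : DS = fun x => (gradient u x 0 + gradient u (reflFirst x) 0) / 2 := funext hDS
  simp only [coord_eq_inner, reflFirst_eq_reflection]
  exact integral_norm_gradient_reflection_average_rpow_le hp (by simp) hu hLp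
end
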